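/- Let E be a finite linearly ordered set, let g : E → E be a bijection, and let k be a commutative ring. Suppose given for each subset γ ⊆ E a k-module N(γ), for each e ∈ γ a k-linear map ∂_{γ,e} : N(γ) → N(γ∖{e}) making the cubical diagram commute, and additive maps σ_γ : N(γ) → N(g(γ)) satisfying the naturality condition σ_{γ∖{e}} ∘ ∂_{γ,e} = ∂_{g(γ),g(e)} ∘ σ_γ for all e ∈ γ. Then for every γ ⊆ E and every x ∈ N(γ): Σ_{e∈γ} (−1)^{pos(e:γ)} · sgn(g:γ∖{e}) · σ_{γ∖{e}}(∂_{γ,e}(x)) = sgn(g:γ) · Σ_{e∈γ} (−1)^{pos(g(e):g(γ))} · ∂_{g(γ),g(e)}(σ_γ(x)), as elements of ⊕_{δ⊆E,|δ|=|γ|−1} N(δ). Equivalently, the signed action g·(y_γ·x) := sgn(g:γ)·y_{g(γ)}·σ_γ(x) commutes with the cubical part of the total-cofibre differential D(y_γ·x) = Σ_{e∈γ} (−1)^{pos(e:γ)} y_{γ∖{e}}·∂_{γ,e}(x). -/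

import Mathlib

open DirectSum

/-- `pos(e:γ)`: the number of elements `j ∈ γ` with `j ≤ e`. -/
def finsetPos {E : Type*} [LinearOrder E] (γ : Finset E) (e : E) : ℕ :=
  (γ.filter (fun j => j ≤ e)).card

/-- `sgn(g:γ)`: the signature of the bijection `γ → g(γ), e ↦ g e`, where both sides are
identified with `Fin γ.card` via the unique order-preserving bijections. -/
noncomputable def finsetSign {E : Type*} [LinearOrder E] (g : E ≃ E) (γ : Finset E) : ℤ :=
  (Equiv.Perm.sign
    (((γ.orderIsoOfFin rfl).toEquiv.trans
      (g.subtypeEquiv (fun a =>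
        ⟨fun ha => Finset.mem_image_of_mem g ha,
         fun hb => by
          obtain ⟨c, hc, hce⟩ := Finset.mem_image.mp hb
          rw [← g.injective hce]; exact hc⟩))).trans
      ((γ.image g).orderIsoOfFin
        (Finset.card_image_of_injective γ g.injective)).toEquiv.symm) : ℤ)

/-!
Naturality turns each summand on the left into the corresponding summand on the right, so
everything reduces to the sign identity
`(-1)^pos(e:γ) · sgn(g:γ∖{e}) = sgn(g:γ) · (-1)^pos(g e:g γ)`.
Enumerate `γ` increasingly so that `e` is its `i`-th element and `g` becomes a permutation `π`
of `Fin (n+1)`; then `g` restricted to `γ∖{e}` is the permutation `ρ` of `Fin n` obtained by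
deleting `i` from the source and `π i` from the target. Conjugating by the cycles moving `i` and
`π i` to the front exhibits `π` as `ρ` fixing `0`, up to two cycles of signs `(-1)^i` and
`(-1)^(π i)`.
-/

namespace Equiv.Perm

theorem sign_eq_of_apply_succAbove {n : ℕ} (π : Perm (Fin (n + 1))) (ρ : Perm (Fin n))
    (i : Fin (n + 1)) (h : ∀ x, π (i.succAbove x) = (π i).succAbove (ρ x)) :
    (sign ρ : ℤ) = (-1) ^ ((i : ℕ) + (π i : ℕ)) * sign π := by
  have hconj :
      Fin.cycleRange (π i) * π * (Fin.cycleRange i)⁻¹ = decomposeFin.symm (0, ρ) := by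
    refine Equiv.ext fun y => ?_
    induction y using Fin.cases with
    | zero =>
      rw [mul_apply, mul_apply, inv_def, Fin.cycleRange_symm_zero, Fin.cycleRange_self,
        decomposeFin_symm_apply_zero]
    | succ x =>
      rw [mul_apply, mul_apply, inv_def, Fin.cycleRange_symm_succ, h, Fin.cycleRange_succAbove,
        decomposeFin_symm_apply_succ, swap_self, refl_apply]
  have hsign := congrArg sign hconj
  rw [map_mul, map_mul, map_inv, Fin.sign_cycleRange, Fin.sign_cycleRange,
    decomposeFin.symm_sign, if_pos rfl, one_mul, Int.units_inv_eq_self] at hsign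
  rw [← hsign]
  push_cast
  ring

end Equiv.Perm

namespace Finset

variable {E : Type*} [LinearOrder E]

theorem orderEmbOfFin_congr {s t : Finset E} (hst : s = t) {n : ℕ} (hs : s.card = n)
    (ht : t.card = n) (x : Fin n) : s.orderEmbOfFin hs x = t.orderEmbOfFin ht x := by
  subst hst; rfl

theorem orderEmbOfFin_erase (γ : Finset E) {n : ℕ} (hn : γ.card = n + 1) (i : Fin (n + 1))
    (hm : (γ.erase (γ.orderEmbOfFin hn i)).card = n) (x : Fin n) :
    (γ.erase (γ.orderEmbOfFin hn i)).orderEmbOfFin hm x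
      = γ.orderEmbOfFin hn (i.succAbove x) := by
  have hmem : ∀ y, γ.orderEmbOfFin hn (i.succAbove y) ∈ γ.erase (γ.orderEmbOfFin hn i) :=
    fun y => mem_erase.mpr
      ⟨fun h => Fin.succAbove_ne i y ((γ.orderEmbOfFin hn).injective h),
        orderEmbOfFin_mem _ _ _⟩
  have hmono : StrictMono fun y => γ.orderEmbOfFin hn (i.succAbove y) :=
    (γ.orderEmbOfFin hn).strictMono.comp (Fin.strictMono_succAbove i)
  exact (congrFun (orderEmbOfFin_unique hm hmem hmono) x).symm

theorem exists_orderEmbOfFin_eq {γ : Finset E} {n : ℕ} (hn : γ.card = n) {e : E}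
    (he : e ∈ γ) : ∃ i, γ.orderEmbOfFin hn i = e := by
  rwa [← Set.mem_range, range_orderEmbOfFin, mem_coe]

end Finset

section SignedAction

variable {E : Type*} [LinearOrder E]

theorem finsetPos_orderEmbOfFin (γ : Finset E) {n : ℕ} (hn : γ.card = n) (i : Fin n) :
    finsetPos γ (γ.orderEmbOfFin hn i) = i + 1 := by
  have hfilter : γ.filter (· ≤ γ.orderEmbOfFin hn i)
      = (Finset.Iic i).map (γ.orderEmbOfFin hn).toEmbedding := by
    ext b
    simp only [Finset.mem_filter, Finset.mem_map, Finset.mem_Iic]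
    constructor
    · rintro ⟨hb, hbi⟩
      obtain ⟨x, rfl⟩ : b ∈ Set.range (γ.orderEmbOfFin hn) := by
        rwa [Finset.range_orderEmbOfFin, Finset.mem_coe]
      exact ⟨x, (γ.orderEmbOfFin hn).le_iff_le.mp hbi, rfl⟩
    · rintro ⟨x, hxi, rfl⟩
      exact ⟨Finset.orderEmbOfFin_mem _ _ _, (γ.orderEmbOfFin hn).le_iff_le.mpr hxi⟩
  rw [finsetPos, hfilter, Finset.card_map, Fin.card_Iic]

/-- `g` acting on `γ`, read through the increasing enumerations of `γ` and `γ.image g`;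
the length `n` is a parameter so that `γ` can be varied without casts. -/
noncomputable def finsetPerm (g : E ≃ E) (γ : Finset E) {n : ℕ} (hn : γ.card = n) :
    Equiv.Perm (Fin n) :=
  ((γ.orderIsoOfFin hn).toEquiv.trans
      (g.subtypeEquiv fun _ => g.injective.mem_finset_image.symm)).trans
    ((γ.image g).orderIsoOfFin
      ((Finset.card_image_of_injective γ g.injective).trans hn)).toEquiv.symm

theorem finsetSign_eq_sign_finsetPerm (g : E ≃ E) (γ : Finset E) {n : ℕ} (hn : γ.card = n) :
    finsetSign g γ = (Equiv.Perm.sign (finsetPerm g γ hn) : ℤ) := by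
  subst hn; rfl

theorem orderEmbOfFin_finsetPerm (g : E ≃ E) (γ : Finset E) {n : ℕ} (hn : γ.card = n)
    (hm : (γ.image g).card = n) (x : Fin n) :
    (γ.image g).orderEmbOfFin hm (finsetPerm g γ hn x) = g (γ.orderEmbOfFin hn x) := by
  rw [← Finset.coe_orderIsoOfFin_apply, finsetPerm]
  simp only [Equiv.trans_apply, OrderIso.coe_toEquiv, Equiv.subtypeEquiv_apply]
  exact congrArg Subtype.val (OrderIso.apply_symm_apply _ _)

theorem finsetPerm_succAbove (g : E ≃ E) (γ : Finset E) {n : ℕ} (hn : γ.card = n + 1)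
    (i : Fin (n + 1)) (hm : (γ.erase (γ.orderEmbOfFin hn i)).card = n) (x : Fin n) :
    finsetPerm g γ hn (i.succAbove x)
      = (finsetPerm g γ hn i).succAbove
          (finsetPerm g (γ.erase (γ.orderEmbOfFin hn i)) hm x) := by
  have hgn : (γ.image g).card = n + 1 := (Finset.card_image_of_injective γ g.injective).trans hn
  have hgm : ((γ.erase (γ.orderEmbOfFin hn i)).image g).card = n :=
    (Finset.card_image_of_injective _ g.injective).trans hm
  have himage : (γ.erase (γ.orderEmbOfFin hn i)).image g
      = (γ.image g).erase ((γ.image g).orderEmbOfFin hgn (finsetPerm g γ hn i)) := by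
    rw [orderEmbOfFin_finsetPerm, Finset.image_erase g.injective]
  apply ((γ.image g).orderEmbOfFin hgn).injective
  rw [orderEmbOfFin_finsetPerm, ← Finset.orderEmbOfFin_erase γ hn i hm,
    ← orderEmbOfFin_finsetPerm g _ hm hgm,
    ← Finset.orderEmbOfFin_erase _ hgn _ (himage ▸ hgm)]
  exact Finset.orderEmbOfFin_congr himage _ _ _

theorem neg_one_pow_finsetPos_mul_finsetSign_erase (g : E ≃ E) {γ : Finset E} {e : E}
    (he : e ∈ γ) :
    (-1 : ℤ) ^ finsetPos γ e * finsetSign g (γ.erase e)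
      = finsetSign g γ * (-1) ^ finsetPos (γ.image g) (g e) := by
  obtain ⟨n, hn⟩ : ∃ n, γ.card = n + 1 :=
    Nat.exists_eq_add_one.mpr (Finset.card_pos.mpr ⟨e, he⟩)
  obtain ⟨i, rfl⟩ := Finset.exists_orderEmbOfFin_eq hn he
  have hm : (γ.erase (γ.orderEmbOfFin hn i)).card = n := by simp [Finset.card_erase_of_mem, hn]
  have hgn : (γ.image g).card = n + 1 := (Finset.card_image_of_injective γ g.injective).trans hn
  rw [← orderEmbOfFin_finsetPerm g γ hn hgn, finsetPos_orderEmbOfFin,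
    finsetPos_orderEmbOfFin, finsetSign_eq_sign_finsetPerm g γ hn,
    finsetSign_eq_sign_finsetPerm g _ hm,
    Equiv.Perm.sign_eq_of_apply_succAbove _ _ i (finsetPerm_succAbove g γ hn i hm)]
  set j : ℕ := (finsetPerm g γ hn i : ℕ)
  rw [← mul_assoc, ← pow_add, show (i : ℕ) + 1 + (i + j) = 2 * i + (j + 1) by ring, pow_add,
    pow_mul]
  simp [mul_comm]

end SignedAction

theorem stmt3_general {E : Type*} [LinearOrder E] (k : Type*) [CommRing k] (g : E ≃ E)
    (N : Finset E → Type*) [∀ γ, AddCommGroup (N γ)] [∀ γ, Module k (N γ)]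
    (der : ∀ (γ : Finset E) (e : E), e ∈ γ → (N γ →ₗ[k] N (γ.erase e)))
    (σ : ∀ γ : Finset E, N γ →+ N (γ.image g))
    (hnat : ∀ (γ : Finset E) (e : E) (he : e ∈ γ) (x : N γ),
      DirectSum.of (fun δ : Finset E => N δ) ((γ.erase e).image g)
          (σ (γ.erase e) (der γ e he x)) =
        DirectSum.of (fun δ : Finset E => N δ) ((γ.image g).erase (g e))
          (der (γ.image g) (g e) (Finset.mem_image_of_mem g he) (σ γ x))) :
    ∀ (γ : Finset E) (x : N γ),
      (∑ e ∈ γ.attach,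
        (((-1 : ℤ) ^ finsetPos γ e.1 * finsetSign g (γ.erase e.1)) •
          DirectSum.of (fun δ : Finset E => N δ) ((γ.erase e.1).image g)
            (σ (γ.erase e.1) (der γ e.1 e.2 x)))) =
      finsetSign g γ •
        ∑ e ∈ γ.attach,
          (((-1 : ℤ) ^ finsetPos (γ.image g) (g e.1)) •
            DirectSum.of (fun δ : Finset E => N δ) ((γ.image g).erase (g e.1))
              (der (γ.image g) (g e.1) (Finset.mem_image_of_mem g e.2) (σ γ x))) := by
  intro γ x
  rw [Finset.smul_sum]
  refine Finset.sum_congr rfl fun e _ => ?_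
  rw [hnat γ e.1 e.2 x, smul_smul, neg_one_pow_finsetPos_mul_finsetSign_erase g e.2]

/-- **Proposition 6.6** (equivariance of the total-cofibre differential).  Given an
`E`-cubical diagram of `k`-modules `N` with structure maps `∂_{γ,e}`, a bijection `g` of `E`
and additive maps `σ_γ : N γ → N (g·γ)` which are natural with respect to the `∂`'s, the
signed action `g·(y_γ·x) = sgn(g:γ)·y_{g·γ}·σ_γ(x)` commutes with the cubical part of the
total-cofibre differential. -/
theorem stmt3 {E : Type*} [LinearOrder E] (k : Type*) [CommRing k] (g : E ≃ E)
    (N : Finset E → Type*) [∀ γ, AddCommGroup (N γ)] [∀ γ, Module k (N γ)]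
    (der : ∀ (γ : Finset E) (e : E), e ∈ γ → (N γ →ₗ[k] N (γ.erase e)))
    (hcomm : ∀ (γ : Finset E) (e e' : E) (he : e ∈ γ) (he' : e' ∈ γ) (hne : e' ≠ e),
      (DirectSum.lof k (Finset E) N ((γ.erase e).erase e')).comp
        ((der (γ.erase e) e' (Finset.mem_erase.mpr ⟨hne, he'⟩)).comp (der γ e he)) =
      (DirectSum.lof k (Finset E) N ((γ.erase e').erase e)).comp
        ((der (γ.erase e') e (Finset.mem_erase.mpr ⟨Ne.symm hne, he⟩)).comp (der γ e' he')))
    (σ : ∀ γ : Finset E, N γ →+ N (γ.image g))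
    (hnat : ∀ (γ : Finset E) (e : E) (he : e ∈ γ) (x : N γ),
      DirectSum.of (fun δ : Finset E => N δ) ((γ.erase e).image g)
          (σ (γ.erase e) (der γ e he x)) =
        DirectSum.of (fun δ : Finset E => N δ) ((γ.image g).erase (g e))
          (der (γ.image g) (g e) (Finset.mem_image_of_mem g he) (σ γ x))) :
    ∀ (γ : Finset E) (x : N γ),
      (∑ e ∈ γ.attach,
        (((-1 : ℤ) ^ finsetPos γ e.1 * finsetSign g (γ.erase e.1)) •
          DirectSum.of (fun δ : Finset E => N δ) ((γ.erase e.1).image g)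
            (σ (γ.erase e.1) (der γ e.1 e.2 x)))) =
      finsetSign g γ •
        ∑ e ∈ γ.attach,
          (((-1 : ℤ) ^ finsetPos (γ.image g) (g e.1)) •
            DirectSum.of (fun δ : Finset E => N δ) ((γ.image g).erase (g e.1))
              (der (γ.image g) (g e.1) (Finset.mem_image_of_mem g e.2) (σ γ x))) :=
  stmt3_general k g N der σ hnat
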